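/- arXiv:1709.06839 — 3 statements merged into one kernel-verified Lean document; each statement's English description precedes it below -/
import Mathlib

section
/- Let V be an n-dimensional normed real vector space, ρ > 0, and μ : [0,∞) → ℝ smooth with μ = 1 on [0,ρ/4], μ = 0 on [ρ/3,∞), and −13/ρ ≤ μ' ≤ 0. For any vector v ∈ V with |v| < ρ/14, the map T : V → V defined by T(w) = w + μ(|w|)·v is a bijection (indeed a diffeomorphism away from 0). -/
/-!
STATEMENT 7: Let V be an n-dimensional normed real vector space, ρ > 0, and
μ : [0,∞) → ℝ smooth with μ = 1 on [0,ρ/4], μ = 0 on [ρ/3,∞), and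
−13/ρ ≤ μ' ≤ 0.  For any vector v ∈ V with ‖v‖ < ρ/14, the map T : V → V
defined by T(w) = w + μ(‖w‖)·v is a bijection.
-/

theorem push_map_bijective
    {V : Type*} [NormedAddCommGroup V] [NormedSpace ℝ V] [FiniteDimensional ℝ V]
    (n : ℕ) (hdim : Module.finrank ℝ V = n)
    (ρ : ℝ) (hρ : 0 < ρ)
    (μ : ℝ → ℝ)
    (hμsmooth : ContDiffOn ℝ (⊤ : ℕ∞) μ (Set.Ici 0))
    (hμone : ∀ r ∈ Set.Icc (0:ℝ) (ρ / 4), μ r = 1)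
    (hμzero : ∀ r, ρ / 3 ≤ r → μ r = 0)
    (hμderiv : ∀ r, 0 < r → -13 / ρ ≤ deriv μ r ∧ deriv μ r ≤ 0)
    (v : V) (hv : ‖v‖ < ρ / 14) :
    Function.Bijective (fun w : V => w + μ ‖w‖ • v) := by
  have hρ13 : (0:ℝ) ≤ 13 / ρ := by positivity
  -- μ is (13/ρ)-Lipschitz on [0, ∞)
  have hlip : ∀ a b : ℝ, 0 ≤ a → 0 ≤ b → |μ a - μ b| ≤ 13 / ρ * |a - b| := by
    have key : ∀ a b : ℝ, 0 ≤ a → a < b → |μ b - μ a| ≤ 13 / ρ * (b - a) := by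
      intro a b ha hab
      have hcont : ContinuousOn μ (Set.Icc a b) :=
        (hμsmooth.continuousOn).mono (fun x hx => le_trans ha hx.1)
      have hderiv : ∀ x ∈ Set.Ioo a b, HasDerivAt μ (deriv μ x) x := by
        intro x hx
        have hx0 : 0 < x := lt_of_le_of_lt ha hx.1
        have : ContDiffAt ℝ (⊤ : ℕ∞) μ x :=
          hμsmooth.contDiffAt (Ici_mem_nhds hx0)
        exact (this.differentiableAt (by simp)).hasDerivAt
      obtain ⟨c, hc, hceq⟩ := exists_hasDerivAt_eq_slope μ (deriv μ) hab hcont hderiv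
      have hc0 : 0 < c := lt_of_le_of_lt ha hc.1
      obtain ⟨h1, h2⟩ := hμderiv c hc0
      have habs : |deriv μ c| ≤ 13 / ρ := by
        rw [abs_le]
        constructor
        · have : -13 / ρ = -(13 / ρ) := by ring
          linarith [this ▸ h1]
        · linarith
      have hslope : |(μ b - μ a) / (b - a)| ≤ 13 / ρ := by rw [← hceq]; exact habs
      have hba : 0 < b - a := by linarith
      calc |μ b - μ a| = |(μ b - μ a) / (b - a)| * (b - a) := by
            rw [abs_div, abs_of_pos hba]; field_simp
        _ ≤ 13 / ρ * (b - a) := by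
            apply mul_le_mul_of_nonneg_right hslope (le_of_lt hba)
    intro a b ha hb
    rcases lt_trichotomy a b with h | h | h
    · have := key a b ha h
      rw [abs_sub_comm, abs_sub_comm a b, abs_of_pos (by linarith : (0:ℝ) < b - a)]
      exact this
    · simp [h]
    · have := key b a hb h
      rw [abs_of_pos (by linarith : (0:ℝ) < a - b)]
      exact this
  -- the perturbation f is K-Lipschitz with K < 1
  set K : ℝ := 13 / ρ * ‖v‖ with hK
  have hK0 : 0 ≤ K := by positivity
  have hK1 : K < 1 := by
    rcases eq_or_lt_of_le (norm_nonneg v) with h | h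
    · simp [hK, ← h]
    · have h14 : (0:ℝ) < ρ / 14 := by positivity
      calc K = 13 / ρ * ‖v‖ := rfl
        _ < 13 / ρ * (ρ / 14) := by
            apply mul_lt_mul_of_pos_left hv (by positivity)
        _ = 13 / 14 := by field_simp
        _ < 1 := by norm_num
  set f : V → V := fun w => μ ‖w‖ • v with hf
  have hflip : ∀ w w' : V, ‖f w - f w'‖ ≤ K * ‖w - w'‖ := by
    intro w w'
    have : f w - f w' = (μ ‖w‖ - μ ‖w'‖) • v := by rw [hf]; simp [sub_smul]
    rw [this, norm_smul, Real.norm_eq_abs]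
    have h1 : |μ ‖w‖ - μ ‖w'‖| ≤ 13 / ρ * |‖w‖ - ‖w'‖| :=
      hlip _ _ (norm_nonneg w) (norm_nonneg w')
    have h2 : |‖w‖ - ‖w'‖| ≤ ‖w - w'‖ := abs_norm_sub_norm_le w w'
    calc |μ ‖w‖ - μ ‖w'‖| * ‖v‖ ≤ 13 / ρ * |‖w‖ - ‖w'‖| * ‖v‖ :=
          mul_le_mul_of_nonneg_right h1 (norm_nonneg v)
      _ ≤ 13 / ρ * ‖w - w'‖ * ‖v‖ := by
          apply mul_le_mul_of_nonneg_right _ (norm_nonneg v)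
          exact mul_le_mul_of_nonneg_left h2 hρ13
      _ = K * ‖w - w'‖ := by rw [hK]; ring
  constructor
  · -- injective
    intro w w' hww
    simp only at hww
    have hww' : w + f w = w' + f w' := hww
    have heq : w - w' = f w' - f w :=
      sub_eq_sub_iff_add_eq_add.mpr (hww'.trans (add_comm _ _))
    by_contra hne
    have hpos : 0 < ‖w - w'‖ := by
      rw [norm_pos_iff, sub_ne_zero]; exact fun h => hne (by rw [h])
    have : ‖w - w'‖ ≤ K * ‖w - w'‖ := by
      calc ‖w - w'‖ = ‖f w' - f w‖ := by rw [heq]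
        _ ≤ K * ‖w' - w‖ := hflip w' w
        _ = K * ‖w - w'‖ := by rw [norm_sub_rev]
    nlinarith
  · -- surjective
    intro y
    haveI : CompleteSpace V := FiniteDimensional.complete ℝ V
    set g : V → V := fun w => y - f w with hg
    have hglip : LipschitzWith ⟨K, hK0⟩ g := by
      apply LipschitzWith.of_dist_le_mul
      intro w w'
      simp only [hg, dist_eq_norm]
      have : y - f w - (y - f w') = f w' - f w := by abel
      rw [this]
      calc ‖f w' - f w‖ ≤ K * ‖w' - w‖ := hflip w' w
        _ = K * ‖w - w'‖ := by rw [norm_sub_rev]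
    have hcontract : ContractingWith ⟨K, hK0⟩ g := by
      constructor
      · exact_mod_cast hK1
      · exact hglip
    obtain ⟨w, hw⟩ := hcontract.exists_fixedPoint 0 (edist_ne_top _ _)
    refine ⟨w, ?_⟩
    have h1 : y - f w = w := hw.1
    have h2 : y = w + f w := sub_eq_iff_eq_add.mp h1
    exact h2.symm
end

section
/- Let A be the exterior algebra Λ(A) ⊗ ℤ[U] over ℤ with deg A = 0 − n (i.e. A in homological degree 0, unit 1 in degree n, U in degree 2n−1, n ≥ 3 odd), with the Chas–Sullivan product ∧, and define a degree 1−n coproduct on basis elements by ∨(A∧U^k) = Σ_{j=1}^{k−2} (A∧U^j) ⊗ (A∧U^{k−1−j}) and ∨(U^k) = Σ_{j=1}^{k−2} [(A∧U^j) ⊗ U^{k−1−j} + U^j ⊗ (A∧U^{k−1−j})]. Then composing ∨ with the Thom-signed product ∧_{Th}, where X ∧_{Th} Y = (−1)^{n·deg X + n} X ∧ Y, gives zero on all basis elements A∧U^k and U^k. -/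
/-!
STATEMENT 14: In H_*(ΛSⁿ) = Λ(A) ⊗ ℤ[U] for n ≥ 3 odd (A in degree 0, unit in
degree n, U in degree 2n−1), with the Chas–Sullivan product ∧ and the coproduct
∨(A∧U^k) = Σ_{j=1}^{k−2} (A∧U^j) ⊗ (A∧U^{k−1−j}),
∨(U^k) = Σ_{j=1}^{k−2} [(A∧U^j) ⊗ U^{k−1−j} + U^j ⊗ (A∧U^{k−1−j})],
composing ∨ with the Thom-signed product X ∧_{Th} Y = (−1)^{n·deg X + n} X ∧ Y
gives zero on all basis elements A∧U^k and U^k.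

The free ℤ-module H_*(ΛSⁿ) is modelled as `(Bool × ℕ) →₀ ℤ`, where `(true, j)`
is the basis element A∧U^j and `(false, j)` is U^j.
-/

/-- Basis element of `Λ(A) ⊗ ℤ[U]`. -/
noncomputable def bas (x : Bool × ℕ) : (Bool × ℕ) →₀ ℤ := Finsupp.single x 1

/-- Homological degree: deg(A∧U^j) = j(n−1), deg(U^j) = (j+1)n − j. -/
def hdeg (n : ℕ) : Bool × ℕ → ℕ
  | (true, j) => j * (n - 1)
  | (false, j) => (j + 1) * n - j

/-- Chas–Sullivan product of basis elements: A∧A = 0, otherwise multiply the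
powers of U and keep A if present. -/
noncomputable def csMul : Bool × ℕ → Bool × ℕ → (Bool × ℕ) →₀ ℤ
  | (true, _), (true, _) => 0
  | (true, j), (false, l) => bas (true, j + l)
  | (false, j), (true, l) => bas (true, j + l)
  | (false, j), (false, l) => bas (false, j + l)

/-- Thom-signed Chas–Sullivan product `X ∧_{Th} Y = (−1)^{n·deg X + n} X ∧ Y`
on basis elements. -/
noncomputable def csMulTh (n : ℕ) (x y : Bool × ℕ) : (Bool × ℕ) →₀ ℤ :=
  ((-1 : ℤ) ^ (n * hdeg n x + n)) • csMul x y

/-!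
For odd `n`, `A∧U^j` has even degree and `U^j` odd degree, so the Thom sign is `-1` on a left
factor `A∧U^j` and `+1` on a left factor `U^j`. Since `A∧U^j ∧ U^l` and `U^j ∧ A∧U^l` are both
`A∧U^{j+l}`, the two halves of each summand of `∧_{Th} ∘ ∨(U^k)` cancel, while every summand of
`∧_{Th} ∘ ∨(A∧U^k)` vanishes because `A∧A = 0`.
-/

theorem csMulTh_true_true (n j l : ℕ) : csMulTh n (true, j) (true, l) = 0 := by
  simp only [csMulTh, csMul, smul_zero]

theorem csMul_true_false_eq_false_true (j l : ℕ) :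
    csMul (true, j) (false, l) = csMul (false, j) (true, l) := rfl

section

variable {n : ℕ}

theorem even_hdeg_true (hn : Odd n) (j : ℕ) : Even (hdeg n (true, j)) := by
  obtain ⟨m, rfl⟩ := hn
  exact ⟨j * m, by simp only [hdeg, Nat.add_sub_cancel]; ring⟩

theorem odd_hdeg_false (hn : Odd n) (j : ℕ) : Odd (hdeg n (false, j)) := by
  obtain ⟨m, rfl⟩ := hn
  have h : (j + 1) * (2 * m + 1) = 2 * (j * m + m) + 1 + j := by ring
  exact ⟨j * m + m, by simp only [hdeg]; omega⟩

theorem csMulTh_true_left (hn : Odd n) (j : ℕ) (y : Bool × ℕ) :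
    csMulTh n (true, j) y = -csMul (true, j) y := by
  have hsign : Odd (n * hdeg n (true, j) + n) :=
    ((even_hdeg_true hn j).mul_left n).add_odd hn
  rw [csMulTh, hsign.neg_one_pow, neg_one_smul]

theorem csMulTh_false_left (hn : Odd n) (j : ℕ) (y : Bool × ℕ) :
    csMulTh n (false, j) y = csMul (false, j) y := by
  have hsign : Even (n * hdeg n (false, j) + n) :=
    (hn.mul (odd_hdeg_false hn j)).add_odd hn
  rw [csMulTh, hsign.neg_one_pow, one_smul]

theorem csMulTh_true_false_add_false_true (hn : Odd n) (j l : ℕ) :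
    csMulTh n (true, j) (false, l) + csMulTh n (false, j) (true, l) = 0 := by
  rw [csMulTh_true_left hn, csMulTh_false_left hn, csMul_true_false_eq_false_true,
    neg_add_cancel]

end

theorem thom_product_coproduct_zero_general (n : ℕ) (hodd : Odd n) (k : ℕ) :
    (∑ j ∈ Finset.Icc 1 (k - 2), csMulTh n (true, j) (true, k - 1 - j)) = 0 ∧
    (∑ j ∈ Finset.Icc 1 (k - 2),
        (csMulTh n (true, j) (false, k - 1 - j) +
          csMulTh n (false, j) (true, k - 1 - j))) = 0 :=
  ⟨Finset.sum_eq_zero fun j _ => csMulTh_true_true n j (k - 1 - j),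
    Finset.sum_eq_zero fun j _ => csMulTh_true_false_add_false_true hodd j (k - 1 - j)⟩

theorem thom_product_coproduct_zero (n : ℕ) (hn : 3 ≤ n) (hodd : Odd n) (k : ℕ) :
    (∑ j ∈ Finset.Icc 1 (k - 2), csMulTh n (true, j) (true, k - 1 - j)) = 0 ∧
    (∑ j ∈ Finset.Icc 1 (k - 2),
        (csMulTh n (true, j) (false, k - 1 - j) +
          csMulTh n (false, j) (true, k - 1 - j))) = 0 :=
  thom_product_coproduct_zero_general n hodd k
end

section
/- In H_*(ΛS^n) = Λ(A) ⊗ ℤ[U] for n ≥ 3 odd, with Δ(A∧U^k) = (−1)^k k · U^{k−1} and the coproduct ∨(A∧U^k) = Σ_{j=1}^{k−2}(A∧U^j) ⊗ (A∧U^{k−1−j}), the genus-one operation t = ∧ ∘ (1 ⊗ Δ) ∘ ∨ satisfies t(A∧U^k) = (−1)^k ⌊(k−1)/2⌋ · A∧U^{k−2}, which is nonzero for all k ≥ 3. -/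
lemma bas_ne_zero (x : Bool × ℕ) : bas x ≠ 0 :=
  Finsupp.single_ne_zero.mpr one_ne_zero

lemma csMul_true_false (j l : ℕ) : csMul (true, j) (false, l) = bas (true, j + l) := rfl

lemma sum_smul_csMul_true_false (c : ℕ → ℤ) (m : ℕ) :
    ∑ j ∈ Finset.Icc 1 m, c j • csMul (true, j) (false, m - j) =
      (∑ j ∈ Finset.Icc 1 m, c j) • bas (true, m) := by
  rw [Finset.sum_smul]
  refine Finset.sum_congr rfl fun j hj => ?_
  rw [csMul_true_false, Nat.add_sub_cancel' (Finset.mem_Icc.mp hj).2]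

lemma sum_range_neg_one_pow_mul_succ (n : ℕ) :
    ∑ i ∈ Finset.range n, (-1 : ℤ) ^ (i + 1) * ((i + 1 : ℕ) : ℤ) =
      (-1) ^ n * (((n + 1) / 2 : ℕ) : ℤ) := by
  induction n with
  | zero => simp
  | succ n ih =>
    rw [Finset.sum_range_succ, ih]
    rcases Nat.even_or_odd n with ⟨c, rfl⟩ | ⟨c, rfl⟩
    · rw [show (c + c + 1) / 2 = c by omega, show (c + c + 1 + 1) / 2 = c + 1 by omega,
        Even.neg_one_pow ⟨c, rfl⟩, Odd.neg_one_pow ⟨c, by ring⟩]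
      push_cast; ring
    · rw [show (2 * c + 1 + 1) / 2 = c + 1 by omega, show (2 * c + 1 + 1 + 1) / 2 = c + 1 by omega,
        Odd.neg_one_pow ⟨c, rfl⟩, Even.neg_one_pow ⟨c + 1, by ring⟩]
      push_cast; ring

lemma sum_Icc_neg_one_pow_mul_sub (k : ℕ) (hk : 2 ≤ k) :
    ∑ j ∈ Finset.Icc 1 (k - 2), (-1 : ℤ) ^ (k - 1 - j) * ((k - 1 - j : ℕ) : ℤ) =
      (-1) ^ k * (((k - 1) / 2 : ℕ) : ℤ) := by
  obtain ⟨m, rfl⟩ : ∃ m, k = m + 2 := ⟨k - 2, by omega⟩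
  have hreflect :
      ∑ j ∈ Finset.Icc 1 m, (-1 : ℤ) ^ (m + 1 - j) * ((m + 1 - j : ℕ) : ℤ) =
        ∑ i ∈ Finset.range m, (-1 : ℤ) ^ (i + 1) * ((i + 1 : ℕ) : ℤ) := by
    refine Finset.sum_nbij' (fun j => m - j) (fun i => m - i) ?_ ?_ ?_ ?_ ?_ <;>
      intro j hj <;> simp only [Finset.mem_Icc, Finset.mem_range] at hj ⊢ <;>
      first | omega | rw [show m + 1 - j = m - j + 1 by omega]
  rw [Nat.add_sub_cancel, show m + 2 - 1 = m + 1 by omega, hreflect,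
    sum_range_neg_one_pow_mul_succ, pow_add, neg_one_sq, mul_one]

theorem genus_one_operation_nonzero_general (k : ℕ) (hk : 3 ≤ k) :
    (∑ j ∈ Finset.Icc 1 (k - 2),
        ((-1 : ℤ) ^ (k - 1 - j) * (k - 1 - j : ℕ)) • csMul (true, j) (false, k - 2 - j)) =
      ((-1 : ℤ) ^ k * ((k - 1) / 2 : ℕ)) • bas (true, k - 2) ∧
    (∑ j ∈ Finset.Icc 1 (k - 2),
        ((-1 : ℤ) ^ (k - 1 - j) * (k - 1 - j : ℕ)) • csMul (true, j) (false, k - 2 - j)) ≠ 0 := by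
  have hformula := sum_smul_csMul_true_false (fun j => (-1 : ℤ) ^ (k - 1 - j) * (k - 1 - j : ℕ))
    (k - 2)
  rw [sum_Icc_neg_one_pow_mul_sub k (by omega)] at hformula
  refine ⟨hformula, ?_⟩
  have hcoeff : (-1 : ℤ) ^ k * (((k - 1) / 2 : ℕ) : ℤ) ≠ 0 :=
    mul_ne_zero (pow_ne_zero _ (by norm_num)) (by exact_mod_cast (by omega : (k - 1) / 2 ≠ 0))
  rw [hformula]
  exact smul_ne_zero hcoeff (bas_ne_zero _)

theorem genus_one_operation_nonzero (n : ℕ) (hn : 3 ≤ n) (hodd : Odd n)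
    (k : ℕ) (hk : 3 ≤ k) :
    (∑ j ∈ Finset.Icc 1 (k - 2),
        ((-1 : ℤ) ^ (k - 1 - j) * (k - 1 - j : ℕ)) • csMul (true, j) (false, k - 2 - j)) =
      ((-1 : ℤ) ^ k * ((k - 1) / 2 : ℕ)) • bas (true, k - 2) ∧
    (∑ j ∈ Finset.Icc 1 (k - 2),
        ((-1 : ℤ) ^ (k - 1 - j) * (k - 1 - j : ℕ)) • csMul (true, j) (false, k - 2 - j)) ≠ 0 :=
  genus_one_operation_nonzero_general k hk
end
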